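/- arXiv:2109.13663 — 2 statements merged into one kernel-verified Lean document; each statement's English description precedes it below -/
import Mathlib

section
/- Let N ≥ 3 and define the constant totally antisymmetric tensor λ on ℝ^N by λ_{ijk} = ε_{ijk} whenever all three indices i,j,k lie in the set {1,2,N} (where ε is the Levi-Civita tensor on these three indices, with λ_{1,2,N} = 1), and λ_{ijk} = 0 otherwise. Then λ satisfies the algebraic condition λ_{nij}λ_{mkp} + λ_{njk}λ_{mip} + λ_{nki}λ_{mjp} + λ_{mij}λ_{nkp} + λ_{mjk}λ_{nip} + λ_{mki}λ_{njp} = 0 for all indices i,j,k,m,n,p, and (being constant) the differential condition Σ_i λ_{ijk} ∂λ_{mnp}/∂z_i = Σ_i (λ_{inp} ∂λ_{mjk}/∂z_i + λ_{ipm} ∂λ_{njk}/∂z_i + λ_{imn} ∂λ_{pjk}/∂z_i); consequently its tri-linear bracket satisfies the fundamental identity. -/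
/-- Partial derivative of `f` at `z` in the `i`-th coordinate direction of `ℝ^N`. -/
noncomputable def pd {N : ℕ} (f : (Fin N → ℝ) → ℝ) (i : Fin N) (z : Fin N → ℝ) : ℝ :=
  fderiv ℝ f z (Pi.single i 1)

/-- Tri-linear bracket `{A,B,C}(z) = Σ_{i,j,k} λ_{ijk}(z) ∂_i A ∂_j B ∂_k C` associated to
the tensor field `lam`. -/
noncomputable def nambu {N : ℕ} (lam : Fin N → Fin N → Fin N → (Fin N → ℝ) → ℝ)
    (A B C : (Fin N → ℝ) → ℝ) (z : Fin N → ℝ) : ℝ :=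
  ∑ i : Fin N, ∑ j : Fin N, ∑ k : Fin N,
    lam i j k z * pd A i z * pd B j z * pd C k z

/-- Total antisymmetry of a tensor field: it changes sign under transposition of any two
of its three indices. -/
def TotallyAntisym {N : ℕ} (lam : Fin N → Fin N → Fin N → (Fin N → ℝ) → ℝ) : Prop :=
  ∀ (i j k : Fin N) (z : Fin N → ℝ),
    lam i j k z = - lam j i k z ∧ lam i j k z = - lam i k j z ∧ lam i j k z = - lam k j i z

/-- The pointwise algebraic condition on the Nambu tensor coming from the fundamental
identity. -/
def AlgCond {N : ℕ} (lam : Fin N → Fin N → Fin N → (Fin N → ℝ) → ℝ) : Prop :=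
  ∀ (z : Fin N → ℝ) (i j k m n p : Fin N),
    lam n i j z * lam m k p z + lam n j k z * lam m i p z + lam n k i z * lam m j p z
      + lam m i j z * lam n k p z + lam m j k z * lam n i p z + lam m k i z * lam n j p z = 0

/-- The differential condition on the Nambu tensor coming from the fundamental identity. -/
def DiffCond {N : ℕ} (lam : Fin N → Fin N → Fin N → (Fin N → ℝ) → ℝ) : Prop :=
  ∀ (z : Fin N → ℝ) (j k m n p : Fin N),
    ∑ i : Fin N, lam i j k z * pd (lam m n p) i z
      = ∑ i : Fin N, (lam i n p z * pd (lam m j k) i z + lam i p m z * pd (lam n j k) i z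
          + lam i m n z * pd (lam p j k) i z)

/-- The fundamental identity for the tri-linear bracket associated to `lam`, required for
all smooth observables. -/
def FundId {N : ℕ} (lam : Fin N → Fin N → Fin N → (Fin N → ℝ) → ℝ) : Prop :=
  ∀ A B C D E : (Fin N → ℝ) → ℝ,
    ContDiff ℝ (⊤ : ℕ∞) A → ContDiff ℝ (⊤ : ℕ∞) B → ContDiff ℝ (⊤ : ℕ∞) C → ContDiff ℝ (⊤ : ℕ∞) D → ContDiff ℝ (⊤ : ℕ∞) E →
    ∀ z : Fin N → ℝ,
      nambu lam (nambu lam A B C) D E z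
        = nambu lam (nambu lam A D E) B C z + nambu lam A (nambu lam B D E) C z
          + nambu lam A B (nambu lam C D E) z

/-- Kronecker delta on `Fin N`. -/
def kron {N : ℕ} (a b : Fin N) : ℝ := if a = b then 1 else 0

/-- The totally antisymmetric tensor supported on the index triple `(a,b,c)`, normalized so
that its value at `(a,b,c)` is `1`; it is the Levi-Civita tensor on the indices `(a,b,c)`
and vanishes whenever an index lies outside `{a,b,c}`. -/
noncomputable def tripleTensor {N : ℕ} (a b c : Fin N) (i j k : Fin N) : ℝ :=
  Matrix.det !![kron i a, kron i b, kron i c;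
                kron j a, kron j b, kron j c;
                kron k a, kron k b, kron k c]

/-- The constant tensor on `ℝ^N` equal to the Levi-Civita tensor on the indices
`(1,2,N)` (here `(0,1,N-1)` with indices starting from `0`) and zero otherwise. -/
noncomputable def lamCanon (N : ℕ) (hN : 3 ≤ N) :
    Fin N → Fin N → Fin N → (Fin N → ℝ) → ℝ :=
  fun i j k _ => tripleTensor ⟨0, by omega⟩ ⟨1, by omega⟩ ⟨N - 1, by omega⟩ i j k


section NambuAux

variable {N : ℕ}


lemma contDiff_pd {f : (Fin N → ℝ) → ℝ} (hf : ContDiff ℝ (⊤ : ℕ∞) f) (i : Fin N) :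
    ContDiff ℝ (⊤ : ℕ∞) (pd f i) :=
  (hf.fderiv_right (by simp)).clm_apply contDiff_const

lemma pd_mul3 {f g h : (Fin N → ℝ) → ℝ} (hf : ContDiff ℝ (⊤ : ℕ∞) f) (hg : ContDiff ℝ (⊤ : ℕ∞) g)
    (hh : ContDiff ℝ (⊤ : ℕ∞) h) (r : ℝ) (l : Fin N) (z : Fin N → ℝ) :
    pd (fun w => r * f w * g w * h w) l z
      = r * (pd f l z * g z * h z + f z * pd g l z * h z + f z * g z * pd h l z) := by
  have Hf := ((hf.differentiable (by simp)) z).hasFDerivAt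
  have Hg := ((hg.differentiable (by simp)) z).hasFDerivAt
  have Hh := ((hh.differentiable (by simp)) z).hasFDerivAt
  have H : HasFDerivAt (fun w => r * f w * g w * h w)
      ((r * f z * g z) • fderiv ℝ h z
        + h z • ((r * f z) • fderiv ℝ g z + g z • (r • fderiv ℝ f z))) z :=
    ((Hf.const_mul r).mul Hg).mul Hh
  show fderiv ℝ (fun w => r * f w * g w * h w) z (Pi.single l 1) = _
  rw [H.fderiv]
  show (r * f z * g z) * fderiv ℝ h z (Pi.single l 1)
      + h z * ((r * f z) * fderiv ℝ g z (Pi.single l 1) + g z * (r * fderiv ℝ f z (Pi.single l 1))) = _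
  show _ = r * (fderiv ℝ f z (Pi.single l 1) * g z * h z + f z * fderiv ℝ g z (Pi.single l 1) * h z
      + f z * g z * fderiv ℝ h z (Pi.single l 1))
  ring

lemma pd_nambu (c : Fin N → Fin N → Fin N → ℝ) {A B C : (Fin N → ℝ) → ℝ}
    (hA : ContDiff ℝ (⊤ : ℕ∞) A) (hB : ContDiff ℝ (⊤ : ℕ∞) B) (hC : ContDiff ℝ (⊤ : ℕ∞) C) (l : Fin N)
    (z : Fin N → ℝ) :
    pd (nambu (fun i j k (_ : Fin N → ℝ) => c i j k) A B C) l z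
      = ∑ i : Fin N, ∑ j : Fin N, ∑ k : Fin N,
          c i j k * (pd (pd A i) l z * pd B j z * pd C k z
            + pd A i z * pd (pd B j) l z * pd C k z
            + pd A i z * pd B j z * pd (pd C k) l z) := by
  have hterm : ∀ i j k : Fin N, ContDiff ℝ (⊤ : ℕ∞) (fun z => c i j k * pd A i z * pd B j z * pd C k z) :=
    fun i j k => ((contDiff_const.mul (contDiff_pd hA i)).mul (contDiff_pd hB j)).mul (contDiff_pd hC k)
  have hsum1 : ∀ i j : Fin N, ContDiff ℝ (⊤ : ℕ∞) (fun z => ∑ k : Fin N, c i j k * pd A i z * pd B j z * pd C k z) :=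
    fun i j => ContDiff.sum fun k _ => hterm i j k
  have hsum2 : ∀ i : Fin N, ContDiff ℝ (⊤ : ℕ∞) (fun z => ∑ j : Fin N, ∑ k : Fin N, c i j k * pd A i z * pd B j z * pd C k z) :=
    fun i => ContDiff.sum fun j _ => hsum1 i j
  have e1 : pd (nambu (fun i j k (_ : Fin N → ℝ) => c i j k) A B C) l z
      = fderiv ℝ (fun z => ∑ i : Fin N, ∑ j : Fin N, ∑ k : Fin N,
          c i j k * pd A i z * pd B j z * pd C k z) z (Pi.single l 1) := rfl
  rw [e1, fderiv_fun_sum (fun i _ => ((hsum2 i).differentiable (by simp)).differentiableAt),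
    ContinuousLinearMap.sum_apply]
  refine Finset.sum_congr rfl fun i _ => ?_
  rw [fderiv_fun_sum (fun j _ => ((hsum1 i j).differentiable (by simp)).differentiableAt),
    ContinuousLinearMap.sum_apply]
  refine Finset.sum_congr rfl fun j _ => ?_
  rw [fderiv_fun_sum (fun k _ => ((hterm i j k).differentiable (by simp)).differentiableAt),
    ContinuousLinearMap.sum_apply]
  refine Finset.sum_congr rfl fun k _ => ?_
  exact pd_mul3 (contDiff_pd hA i) (contDiff_pd hB j) (contDiff_pd hC k) (c i j k) l z

lemma pd2_symm {f : (Fin N → ℝ) → ℝ} (hf : ContDiff ℝ (⊤ : ℕ∞) f) (i l : Fin N) (z : Fin N → ℝ) :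
    pd (pd f i) l z = pd (pd f l) i z := by
  have hsymm : IsSymmSndFDerivAt ℝ f z :=
    (hf.contDiffAt).isSymmSndFDerivAt (by rw [minSmoothness_of_isRCLikeNormedField]; exact WithTop.coe_le_coe.mpr (le_top : (2 : ℕ∞) ≤ ⊤))
  have hdf : DifferentiableAt ℝ (fderiv ℝ f) z :=
    ((hf.fderiv_right (m := (⊤ : ℕ∞)) (by simp)).differentiable (by simp)).differentiableAt
  have key : ∀ v w : Fin N → ℝ,
      fderiv ℝ (fun y => fderiv ℝ f y v) z w = fderiv ℝ (fderiv ℝ f) z w v := by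
    intro v w
    have h := (hdf.hasFDerivAt.clm_apply (hasFDerivAt_const v z)).fderiv
    rw [h]
    simp
  show fderiv ℝ (fun y => fderiv ℝ f y (Pi.single i 1)) z (Pi.single l 1) = 
    fderiv ℝ (fun y => fderiv ℝ f y (Pi.single l 1)) z (Pi.single i 1)
  rw [key, key, hsymm]


abbrev T6 (N : ℕ) := Fin N × Fin N × Fin N × Fin N × Fin N × Fin N

noncomputable abbrev S6 {N : ℕ} (g : Fin N → Fin N → Fin N → Fin N → Fin N → Fin N → ℝ) : ℝ :=
  ∑ l : Fin N, ∑ m : Fin N, ∑ n : Fin N, ∑ i : Fin N, ∑ j : Fin N, ∑ k : Fin N, g l m n i j k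

lemma sum6_flat (h : T6 N → ℝ) :
    (∑ p : T6 N, h p)
      = ∑ l : Fin N, ∑ m : Fin N, ∑ n : Fin N, ∑ i : Fin N, ∑ j : Fin N, ∑ k : Fin N,
          h (l, m, n, i, j, k) := by
  simp only [Fintype.sum_prod_type]

lemma sum6_perm (g : Fin N → Fin N → Fin N → Fin N → Fin N → Fin N → ℝ)
    (σ : T6 N → T6 N) (hσ : Function.Bijective σ) :
    S6 (fun l m n i j k => g (σ (l, m, n, i, j, k)).1 (σ (l, m, n, i, j, k)).2.1
        (σ (l, m, n, i, j, k)).2.2.1 (σ (l, m, n, i, j, k)).2.2.2.1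
        (σ (l, m, n, i, j, k)).2.2.2.2.1 (σ (l, m, n, i, j, k)).2.2.2.2.2)
      = S6 g := by
  have h2 := sum6_flat (fun p : T6 N => g p.1 p.2.1 p.2.2.1 p.2.2.2.1 p.2.2.2.2.1 p.2.2.2.2.2)
  have h1 := sum6_flat (fun p : T6 N =>
    g (σ p).1 (σ p).2.1 (σ p).2.2.1 (σ p).2.2.2.1 (σ p).2.2.2.2.1 (σ p).2.2.2.2.2)
  calc _ = ∑ p : T6 N, g (σ p).1 (σ p).2.1 (σ p).2.2.1 (σ p).2.2.2.1 (σ p).2.2.2.2.1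
            (σ p).2.2.2.2.2 := h1.symm
    _ = ∑ p : T6 N, g p.1 p.2.1 p.2.2.1 p.2.2.2.1 p.2.2.2.2.1 p.2.2.2.2.2 :=
        Function.Bijective.sum_comp hσ
          (fun p : T6 N => g p.1 p.2.1 p.2.2.1 p.2.2.2.1 p.2.2.2.2.1 p.2.2.2.2.2)
    _ = _ := h2

lemma sum6_congr {g h : Fin N → Fin N → Fin N → Fin N → Fin N → Fin N → ℝ}
    (H : ∀ l m n i j k, g l m n i j k = h l m n i j k) : S6 g = S6 h :=
  Finset.sum_congr rfl fun l _ => Finset.sum_congr rfl fun m _ =>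
    Finset.sum_congr rfl fun n _ => Finset.sum_congr rfl fun i _ =>
      Finset.sum_congr rfl fun j _ => Finset.sum_congr rfl fun k _ => H l m n i j k

lemma sum6_add (g h : Fin N → Fin N → Fin N → Fin N → Fin N → Fin N → ℝ) :
    S6 (fun l m n i j k => g l m n i j k + h l m n i j k) = S6 g + S6 h := by
  show (∑ l : Fin N, ∑ m : Fin N, ∑ n : Fin N, ∑ i : Fin N, ∑ j : Fin N, ∑ k : Fin N,
      (g l m n i j k + h l m n i j k)) = _
  simp only [Finset.sum_add_distrib]

def permOf (f g : T6 N → T6 N) (h1 : ∀ p, g (f p) = p) (h2 : ∀ p, f (g p) = p) :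
    Function.Bijective f := (Equiv.mk f g h1 h2).bijective

lemma keyIdentity (c : Fin N → Fin N → Fin N → ℝ)
    (hD : ∀ l m n i j k : Fin N,
      c j m n * c l i k + c l j n * c m i k + c l m j * c n i k
        + c i m n * c l j k + c l i n * c m j k + c l m i * c n j k = 0)
    (hE : ∀ l m n i j k : Fin N,
      c j m n * c l k i + c l j n * c m k i + c l m j * c n k i
        + c i m n * c l k j + c l i n * c m k j + c l m i * c n k j = 0)
    (a b cc d e : Fin N → ℝ) (a2 b2 c2 d2 e2 : Fin N → Fin N → ℝ)
    (ha2 : ∀ i j, a2 i j = a2 j i) (hb2 : ∀ i j, b2 i j = b2 j i)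
    (hc2 : ∀ i j, c2 i j = c2 j i) (hd2 : ∀ i j, d2 i j = d2 j i)
    (he2 : ∀ i j, e2 i j = e2 j i) :
    (∑ l : Fin N, ∑ m : Fin N, ∑ n : Fin N,
        c l m n * (∑ i : Fin N, ∑ j : Fin N, ∑ k : Fin N,
          c i j k * (a2 i l * b j * cc k + a i * b2 j l * cc k + a i * b j * c2 k l)) * d m * e n)
      = (∑ l : Fin N, ∑ m : Fin N, ∑ n : Fin N,
          c l m n * (∑ i : Fin N, ∑ j : Fin N, ∑ k : Fin N,
            c i j k * (a2 i l * d j * e k + a i * d2 j l * e k + a i * d j * e2 k l)) * b m * cc n)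
        + (∑ l : Fin N, ∑ m : Fin N, ∑ n : Fin N,
            c l m n * a l * (∑ i : Fin N, ∑ j : Fin N, ∑ k : Fin N,
              c i j k * (b2 i m * d j * e k + b i * d2 j m * e k + b i * d j * e2 k m)) * cc n)
        + (∑ l : Fin N, ∑ m : Fin N, ∑ n : Fin N,
            c l m n * a l * b m * (∑ i : Fin N, ∑ j : Fin N, ∑ k : Fin N,
              c i j k * (c2 i n * d j * e k + cc i * d2 j n * e k + cc i * d j * e2 k n))) := by
  -- Group A
  have hA : S6 (fun l m n i j k => c l m n * (c i j k * (a2 i l * b j * cc k)) * d m * e n)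
      = S6 (fun l m n i j k => c l m n * (c i j k * (a2 i l * d j * e k)) * b m * cc n) := by
    calc S6 (fun l m n i j k => c l m n * (c i j k * (a2 i l * b j * cc k)) * d m * e n)
        = S6 (fun l m n i j k => c i j k * (c l m n * (a2 l i * d m * e n)) * b j * cc k) :=
          sum6_congr fun l m n i j k => by rw [ha2 l i]; ring
      _ = S6 (fun l m n i j k => c l m n * (c i j k * (a2 i l * d j * e k)) * b m * cc n) :=
          sum6_perm (fun l m n i j k => c l m n * (c i j k * (a2 i l * d j * e k)) * b m * cc n) (fun p => (p.2.2.2.1, p.2.2.2.2.1, p.2.2.2.2.2, p.1, p.2.1, p.2.2.1))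
            (permOf _ (fun p => (p.2.2.2.1, p.2.2.2.2.1, p.2.2.2.2.2, p.1, p.2.1, p.2.2.1))
              (fun ⟨_,_,_,_,_,_⟩ => rfl) (fun ⟨_,_,_,_,_,_⟩ => rfl))
  -- Group B
  have hB : S6 (fun l m n i j k => c l m n * (c i j k * (a i * b2 j l * cc k)) * d m * e n)
      = S6 (fun l m n i j k => c l m n * a l * (c i j k * (b2 i m * d j * e k)) * cc n) := by
    calc S6 (fun l m n i j k => c l m n * (c i j k * (a i * b2 j l * cc k)) * d m * e n)
        = S6 (fun l m n i j k => c i j k * a i * (c l m n * (b2 l j * d m * e n)) * cc k) :=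
          sum6_congr fun l m n i j k => by rw [hb2 l j]; ring
      _ = S6 (fun l m n i j k => c l m n * a l * (c i j k * (b2 i m * d j * e k)) * cc n) :=
          sum6_perm (fun l m n i j k => c l m n * a l * (c i j k * (b2 i m * d j * e k)) * cc n) (fun p => (p.2.2.2.1, p.2.2.2.2.1, p.2.2.2.2.2, p.1, p.2.1, p.2.2.1))
            (permOf _ (fun p => (p.2.2.2.1, p.2.2.2.2.1, p.2.2.2.2.2, p.1, p.2.1, p.2.2.1))
              (fun ⟨_,_,_,_,_,_⟩ => rfl) (fun ⟨_,_,_,_,_,_⟩ => rfl))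
  -- Group C
  have hC : S6 (fun l m n i j k => c l m n * (c i j k * (a i * b j * c2 k l)) * d m * e n)
      = S6 (fun l m n i j k => c l m n * a l * b m * (c i j k * (c2 i n * d j * e k))) := by
    calc S6 (fun l m n i j k => c l m n * (c i j k * (a i * b j * c2 k l)) * d m * e n)
        = S6 (fun l m n i j k => c i j k * a i * b j * (c l m n * (c2 l k * d m * e n))) :=
          sum6_congr fun l m n i j k => by rw [hc2 l k]; ring
      _ = S6 (fun l m n i j k => c l m n * a l * b m * (c i j k * (c2 i n * d j * e k))) :=
          sum6_perm (fun l m n i j k => c l m n * a l * b m * (c i j k * (c2 i n * d j * e k))) (fun p => (p.2.2.2.1, p.2.2.2.2.1, p.2.2.2.2.2, p.1, p.2.1, p.2.2.1))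
            (permOf _ (fun p => (p.2.2.2.1, p.2.2.2.2.1, p.2.2.2.2.2, p.1, p.2.1, p.2.2.1))
              (fun ⟨_,_,_,_,_,_⟩ => rfl) (fun ⟨_,_,_,_,_,_⟩ => rfl))
  -- Group D: second derivatives of D
  have eU1 : S6 (fun l m n i j k => c l m n * (c i j k * (a i * d2 j l * e k)) * b m * cc n)
      = S6 (fun l m n i j k => c j m n * c l i k * (a l * b m * cc n * d2 i j * e k)) := by
    calc S6 (fun l m n i j k => c l m n * (c i j k * (a i * d2 j l * e k)) * b m * cc n)
        = S6 (fun l m n i j k => c j m n * (c l i k * (a l * d2 i j * e k)) * b m * cc n) :=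
          (sum6_perm (fun l m n i j k => c l m n * (c i j k * (a i * d2 j l * e k)) * b m * cc n)
            (fun p => (p.2.2.2.2.1, p.2.1, p.2.2.1, p.1, p.2.2.2.1, p.2.2.2.2.2))
            (permOf _ (fun q => (q.2.2.2.1, q.2.1, q.2.2.1, q.2.2.2.2.1, q.1, q.2.2.2.2.2))
              (fun ⟨_,_,_,_,_,_⟩ => rfl) (fun ⟨_,_,_,_,_,_⟩ => rfl))).symm
      _ = S6 (fun l m n i j k => c j m n * c l i k * (a l * b m * cc n * d2 i j * e k)) :=
          sum6_congr fun l m n i j k => by ring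
  have eU2 : S6 (fun l m n i j k => c l m n * a l * (c i j k * (b i * d2 j m * e k)) * cc n)
      = S6 (fun l m n i j k => c l j n * c m i k * (a l * b m * cc n * d2 i j * e k)) := by
    calc S6 (fun l m n i j k => c l m n * a l * (c i j k * (b i * d2 j m * e k)) * cc n)
        = S6 (fun l m n i j k => c l j n * a l * (c m i k * (b m * d2 i j * e k)) * cc n) :=
          (sum6_perm (fun l m n i j k => c l m n * a l * (c i j k * (b i * d2 j m * e k)) * cc n)
            (fun p => (p.1, p.2.2.2.2.1, p.2.2.1, p.2.1, p.2.2.2.1, p.2.2.2.2.2))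
            (permOf _ (fun q => (q.1, q.2.2.2.1, q.2.2.1, q.2.2.2.2.1, q.2.1, q.2.2.2.2.2))
              (fun ⟨_,_,_,_,_,_⟩ => rfl) (fun ⟨_,_,_,_,_,_⟩ => rfl))).symm
      _ = S6 (fun l m n i j k => c l j n * c m i k * (a l * b m * cc n * d2 i j * e k)) :=
          sum6_congr fun l m n i j k => by ring
  have eU3 : S6 (fun l m n i j k => c l m n * a l * b m * (c i j k * (cc i * d2 j n * e k)))
      = S6 (fun l m n i j k => c l m j * c n i k * (a l * b m * cc n * d2 i j * e k)) := by
    calc S6 (fun l m n i j k => c l m n * a l * b m * (c i j k * (cc i * d2 j n * e k)))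
        = S6 (fun l m n i j k => c l m j * a l * b m * (c n i k * (cc n * d2 i j * e k))) :=
          (sum6_perm (fun l m n i j k => c l m n * a l * b m * (c i j k * (cc i * d2 j n * e k)))
            (fun p => (p.1, p.2.1, p.2.2.2.2.1, p.2.2.1, p.2.2.2.1, p.2.2.2.2.2))
            (permOf _ (fun q => (q.1, q.2.1, q.2.2.2.1, q.2.2.2.2.1, q.2.2.1, q.2.2.2.2.2))
              (fun ⟨_,_,_,_,_,_⟩ => rfl) (fun ⟨_,_,_,_,_,_⟩ => rfl))).symm
      _ = S6 (fun l m n i j k => c l m j * c n i k * (a l * b m * cc n * d2 i j * e k)) :=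
          sum6_congr fun l m n i j k => by ring
  have hDgrp : S6 (fun l m n i j k => c l m n * (c i j k * (a i * d2 j l * e k)) * b m * cc n)
      + S6 (fun l m n i j k => c l m n * a l * (c i j k * (b i * d2 j m * e k)) * cc n)
      + S6 (fun l m n i j k => c l m n * a l * b m * (c i j k * (cc i * d2 j n * e k))) = 0 := by
    rw [eU1, eU2, eU3]
    set SD := S6 (fun l m n i j k => c j m n * c l i k * (a l * b m * cc n * d2 i j * e k))
      + S6 (fun l m n i j k => c l j n * c m i k * (a l * b m * cc n * d2 i j * e k))
      + S6 (fun l m n i j k => c l m j * c n i k * (a l * b m * cc n * d2 i j * e k)) with hSD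
    have step1 : SD = S6 (fun l m n i j k =>
        (c j m n * c l i k + c l j n * c m i k + c l m j * c n i k)
          * (a l * b m * cc n * d2 i j * e k)) := by
      rw [hSD, ← sum6_add, ← sum6_add]
      exact (sum6_congr fun l m n i j k => by ring).symm
    have step2 : SD = S6 (fun l m n i j k =>
        (c i m n * c l j k + c l i n * c m j k + c l m i * c n j k)
          * (a l * b m * cc n * d2 i j * e k)) := by
      rw [step1]
      calc S6 (fun l m n i j k =>
          (c j m n * c l i k + c l j n * c m i k + c l m j * c n i k)
            * (a l * b m * cc n * d2 i j * e k))
          = S6 (fun l m n i j k =>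
            (c i m n * c l j k + c l i n * c m j k + c l m i * c n j k)
              * (a l * b m * cc n * d2 j i * e k)) :=
            (sum6_perm (fun l m n i j k =>
              (c j m n * c l i k + c l j n * c m i k + c l m j * c n i k)
                * (a l * b m * cc n * d2 i j * e k))
              (fun p => (p.1, p.2.1, p.2.2.1, p.2.2.2.2.1, p.2.2.2.1, p.2.2.2.2.2))
              (permOf _ (fun p => (p.1, p.2.1, p.2.2.1, p.2.2.2.2.1, p.2.2.2.1, p.2.2.2.2.2))
                (fun ⟨_,_,_,_,_,_⟩ => rfl) (fun ⟨_,_,_,_,_,_⟩ => rfl))).symm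
        _ = S6 (fun l m n i j k =>
            (c i m n * c l j k + c l i n * c m j k + c l m i * c n j k)
              * (a l * b m * cc n * d2 i j * e k)) :=
            sum6_congr fun l m n i j k => by rw [hd2 j i]
    have : SD + SD = 0 := by
      nth_rewrite 1 [step1]
      nth_rewrite 1 [step2]
      rw [← sum6_add]
      calc S6 (fun l m n i j k =>
          (c j m n * c l i k + c l j n * c m i k + c l m j * c n i k)
            * (a l * b m * cc n * d2 i j * e k)
          + (c i m n * c l j k + c l i n * c m j k + c l m i * c n j k)
            * (a l * b m * cc n * d2 i j * e k))
          = S6 (fun _ _ _ _ _ _ => 0) := sum6_congr fun l m n i j k => by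
            have h := hD l m n i j k
            linear_combination (a l * b m * cc n * d2 i j * e k) * h
        _ = 0 := by simp [S6]
    linarith
  -- Group E: second derivatives of E
  have eV1 : S6 (fun l m n i j k => c l m n * (c i j k * (a i * d j * e2 k l)) * b m * cc n)
      = S6 (fun l m n i j k => c j m n * c l k i * (a l * b m * cc n * d k * e2 i j)) := by
    calc S6 (fun l m n i j k => c l m n * (c i j k * (a i * d j * e2 k l)) * b m * cc n)
        = S6 (fun l m n i j k => c j m n * (c l k i * (a l * d k * e2 i j)) * b m * cc n) :=
          (sum6_perm (fun l m n i j k => c l m n * (c i j k * (a i * d j * e2 k l)) * b m * cc n)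
            (fun p => (p.2.2.2.2.1, p.2.1, p.2.2.1, p.1, p.2.2.2.2.2, p.2.2.2.1))
            (permOf _ (fun q => (q.2.2.2.1, q.2.1, q.2.2.1, q.2.2.2.2.2, q.1, q.2.2.2.2.1))
              (fun ⟨_,_,_,_,_,_⟩ => rfl) (fun ⟨_,_,_,_,_,_⟩ => rfl))).symm
      _ = S6 (fun l m n i j k => c j m n * c l k i * (a l * b m * cc n * d k * e2 i j)) :=
          sum6_congr fun l m n i j k => by ring
  have eV2 : S6 (fun l m n i j k => c l m n * a l * (c i j k * (b i * d j * e2 k m)) * cc n)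
      = S6 (fun l m n i j k => c l j n * c m k i * (a l * b m * cc n * d k * e2 i j)) := by
    calc S6 (fun l m n i j k => c l m n * a l * (c i j k * (b i * d j * e2 k m)) * cc n)
        = S6 (fun l m n i j k => c l j n * a l * (c m k i * (b m * d k * e2 i j)) * cc n) :=
          (sum6_perm (fun l m n i j k => c l m n * a l * (c i j k * (b i * d j * e2 k m)) * cc n)
            (fun p => (p.1, p.2.2.2.2.1, p.2.2.1, p.2.1, p.2.2.2.2.2, p.2.2.2.1))
            (permOf _ (fun q => (q.1, q.2.2.2.1, q.2.2.1, q.2.2.2.2.2, q.2.1, q.2.2.2.2.1))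
              (fun ⟨_,_,_,_,_,_⟩ => rfl) (fun ⟨_,_,_,_,_,_⟩ => rfl))).symm
      _ = S6 (fun l m n i j k => c l j n * c m k i * (a l * b m * cc n * d k * e2 i j)) :=
          sum6_congr fun l m n i j k => by ring
  have eV3 : S6 (fun l m n i j k => c l m n * a l * b m * (c i j k * (cc i * d j * e2 k n)))
      = S6 (fun l m n i j k => c l m j * c n k i * (a l * b m * cc n * d k * e2 i j)) := by
    calc S6 (fun l m n i j k => c l m n * a l * b m * (c i j k * (cc i * d j * e2 k n)))
        = S6 (fun l m n i j k => c l m j * a l * b m * (c n k i * (cc n * d k * e2 i j))) :=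
          (sum6_perm (fun l m n i j k => c l m n * a l * b m * (c i j k * (cc i * d j * e2 k n)))
            (fun p => (p.1, p.2.1, p.2.2.2.2.1, p.2.2.1, p.2.2.2.2.2, p.2.2.2.1))
            (permOf _ (fun q => (q.1, q.2.1, q.2.2.2.1, q.2.2.2.2.2, q.2.2.1, q.2.2.2.2.1))
              (fun ⟨_,_,_,_,_,_⟩ => rfl) (fun ⟨_,_,_,_,_,_⟩ => rfl))).symm
      _ = S6 (fun l m n i j k => c l m j * c n k i * (a l * b m * cc n * d k * e2 i j)) :=
          sum6_congr fun l m n i j k => by ring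
  have hEgrp : S6 (fun l m n i j k => c l m n * (c i j k * (a i * d j * e2 k l)) * b m * cc n)
      + S6 (fun l m n i j k => c l m n * a l * (c i j k * (b i * d j * e2 k m)) * cc n)
      + S6 (fun l m n i j k => c l m n * a l * b m * (c i j k * (cc i * d j * e2 k n))) = 0 := by
    rw [eV1, eV2, eV3]
    set SE := S6 (fun l m n i j k => c j m n * c l k i * (a l * b m * cc n * d k * e2 i j))
      + S6 (fun l m n i j k => c l j n * c m k i * (a l * b m * cc n * d k * e2 i j))
      + S6 (fun l m n i j k => c l m j * c n k i * (a l * b m * cc n * d k * e2 i j)) with hSE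
    have step1 : SE = S6 (fun l m n i j k =>
        (c j m n * c l k i + c l j n * c m k i + c l m j * c n k i)
          * (a l * b m * cc n * d k * e2 i j)) := by
      rw [hSE, ← sum6_add, ← sum6_add]
      exact (sum6_congr fun l m n i j k => by ring).symm
    have step2 : SE = S6 (fun l m n i j k =>
        (c i m n * c l k j + c l i n * c m k j + c l m i * c n k j)
          * (a l * b m * cc n * d k * e2 i j)) := by
      rw [step1]
      calc S6 (fun l m n i j k =>
          (c j m n * c l k i + c l j n * c m k i + c l m j * c n k i)
            * (a l * b m * cc n * d k * e2 i j))
          = S6 (fun l m n i j k =>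
            (c i m n * c l k j + c l i n * c m k j + c l m i * c n k j)
              * (a l * b m * cc n * d k * e2 j i)) :=
            (sum6_perm (fun l m n i j k =>
              (c j m n * c l k i + c l j n * c m k i + c l m j * c n k i)
                * (a l * b m * cc n * d k * e2 i j))
              (fun p => (p.1, p.2.1, p.2.2.1, p.2.2.2.2.1, p.2.2.2.1, p.2.2.2.2.2))
              (permOf _ (fun p => (p.1, p.2.1, p.2.2.1, p.2.2.2.2.1, p.2.2.2.1, p.2.2.2.2.2))
                (fun ⟨_,_,_,_,_,_⟩ => rfl) (fun ⟨_,_,_,_,_,_⟩ => rfl))).symm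
        _ = S6 (fun l m n i j k =>
            (c i m n * c l k j + c l i n * c m k j + c l m i * c n k j)
              * (a l * b m * cc n * d k * e2 i j)) :=
            sum6_congr fun l m n i j k => by rw [he2 j i]
    have : SE + SE = 0 := by
      nth_rewrite 1 [step1]
      nth_rewrite 1 [step2]
      rw [← sum6_add]
      calc S6 (fun l m n i j k =>
          (c j m n * c l k i + c l j n * c m k i + c l m j * c n k i)
            * (a l * b m * cc n * d k * e2 i j)
          + (c i m n * c l k j + c l i n * c m k j + c l m i * c n k j)
            * (a l * b m * cc n * d k * e2 i j))
          = S6 (fun _ _ _ _ _ _ => 0) := sum6_congr fun l m n i j k => by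
            have h := hE l m n i j k
            linear_combination (a l * b m * cc n * d k * e2 i j) * h
        _ = 0 := by simp [S6]
    linarith
  -- assemble
  simp only [mul_add, add_mul, Finset.mul_sum, Finset.sum_mul, Finset.sum_add_distrib]
  linarith [hA, hB, hC, hDgrp, hEgrp]


theorem fundId_const (c : Fin N → Fin N → Fin N → ℝ)
    (hD : ∀ l m n i j k : Fin N,
      c j m n * c l i k + c l j n * c m i k + c l m j * c n i k
        + c i m n * c l j k + c l i n * c m j k + c l m i * c n j k = 0)
    (hE : ∀ l m n i j k : Fin N,
      c j m n * c l k i + c l j n * c m k i + c l m j * c n k i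
        + c i m n * c l k j + c l i n * c m k j + c l m i * c n k j = 0) :
    FundId (fun i j k (_ : Fin N → ℝ) => c i j k) := by
  intro A B C D E hA hB hC hD' hE' z
  simp only [nambu]
  simp only [pd_nambu c hA hB hC, pd_nambu c hA hD' hE', pd_nambu c hB hD' hE',
    pd_nambu c hC hD' hE']
  exact keyIdentity c hD hE (fun i => pd A i z) (fun i => pd B i z) (fun i => pd C i z)
    (fun i => pd D i z) (fun i => pd E i z)
    (fun i l => pd (pd A i) l z) (fun i l => pd (pd B i) l z) (fun i l => pd (pd C i) l z)
    (fun i l => pd (pd D i) l z) (fun i l => pd (pd E i) l z)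
    (fun i l => pd2_symm hA i l z) (fun i l => pd2_symm hB i l z)
    (fun i l => pd2_symm hC i l z) (fun i l => pd2_symm hD' i l z)
    (fun i l => pd2_symm hE' i l z)

end NambuAux

lemma tripleTensor_expand {N : ℕ} (a b c : Fin N) (i j k : Fin N) :
    tripleTensor a b c i j k =
      kron i a * (kron j b * kron k c) - kron i a * (kron j c * kron k b)
      - kron i b * (kron j a * kron k c) + kron i b * (kron j c * kron k a)
      + kron i c * (kron j a * kron k b) - kron i c * (kron j b * kron k a) := by
  simp [tripleTensor, Matrix.det_fin_three]
  ring

set_option maxHeartbeats 1000000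

/-- for `N ≥ 3` the constant tensor which is the Levi-Civita tensor on the
indices `(1,2,N)` and zero otherwise satisfies the algebraic condition and (being
constant) the differential condition; consequently its tri-linear bracket satisfies the
fundamental identity. -/
theorem statement4 (N : ℕ) (hN : 3 ≤ N) :
    AlgCond (lamCanon N hN) ∧ DiffCond (lamCanon N hN) ∧ FundId (lamCanon N hN) := by
  set a0 : Fin N := ⟨0, by omega⟩
  set b0 : Fin N := ⟨1, by omega⟩
  set c0 : Fin N := ⟨N - 1, by omega⟩
  refine ⟨?_, ?_, ?_⟩
  · intro z i j k m n p
    show tripleTensor a0 b0 c0 n i j * tripleTensor a0 b0 c0 m k p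
      + tripleTensor a0 b0 c0 n j k * tripleTensor a0 b0 c0 m i p
      + tripleTensor a0 b0 c0 n k i * tripleTensor a0 b0 c0 m j p
      + tripleTensor a0 b0 c0 m i j * tripleTensor a0 b0 c0 n k p
      + tripleTensor a0 b0 c0 m j k * tripleTensor a0 b0 c0 n i p
      + tripleTensor a0 b0 c0 m k i * tripleTensor a0 b0 c0 n j p = 0
    simp only [tripleTensor_expand]
    ring
  · intro z j k m n p
    have hz : ∀ (x y w : Fin N) (i : Fin N),
        pd (lamCanon N hN x y w) i z = 0 := by
      intro x y w i
      show fderiv ℝ (fun _ : Fin N → ℝ => tripleTensor a0 b0 c0 x y w) z (Pi.single i 1) = 0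
      simp
    simp [hz]
  · have key := fundId_const (N := N) (fun i j k => tripleTensor a0 b0 c0 i j k) ?_ ?_
    · exact key
    · intro l m n i j k
      simp only [tripleTensor_expand]
      ring
    · intro l m n i j k
      simp only [tripleTensor_expand]
      ring
end

section
/- Let λ be a smooth totally antisymmetric tensor field on ℝ^N whose tri-linear bracket satisfies the fundamental identity for all smooth observables, and let h : ℝ^N → ℝ^N be a smooth diffeomorphism with smooth inverse h̃. Then the transformed tensor λ̃_{ijk}(x) = {h_i, h_j, h_k}(h̃(x)) also defines a bracket (in the variables x) that satisfies the fundamental identity {{Ã,B̃,C̃},D̃,Ẽ} = {{Ã,D̃,Ẽ},B̃,C̃} + {Ã,{B̃,D̃,Ẽ},C̃} + {Ã,B̃,{C̃,D̃,Ẽ}} for all smooth functions Ã,B̃,C̃,D̃,Ẽ : ℝ^N → ℝ. -/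
section Aux

lemma pd_contDiff {N : ℕ} {f : (Fin N → ℝ) → ℝ} (hf : ContDiff ℝ (⊤ : ℕ∞) f) (i : Fin N) :
    ContDiff ℝ (⊤ : ℕ∞) (pd f i) :=
  (hf.fderiv_right (le_refl _)).clm_apply contDiff_const

lemma pd_comp {N : ℕ} {A : (Fin N → ℝ) → ℝ} {h : (Fin N → ℝ) → (Fin N → ℝ)}
    (hA : Differentiable ℝ A) (hh : Differentiable ℝ h) (i : Fin N) (z : Fin N → ℝ) :
    pd (fun y => A (h y)) i z = ∑ a, pd A a (h z) * pd (fun y => h y a) i z := by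
  have hcomp : fderiv ℝ (fun y => A (h y)) z = (fderiv ℝ A (h z)).comp (fderiv ℝ h z) :=
    fderiv_comp z (hA (h z)) (hh z)
  have hcoord : ∀ a, pd (fun y => h y a) i z = fderiv ℝ h z (Pi.single i 1) a := by
    intro a
    have : fderiv ℝ (fun y => h y a) z = (ContinuousLinearMap.proj a).comp (fderiv ℝ h z) := by
      exact ((ContinuousLinearMap.proj a).hasFDerivAt.comp z (hh z).hasFDerivAt).fderiv
    simp [pd, this]
  set v := fderiv ℝ h z (Pi.single i 1) with hv
  have hexp : fderiv ℝ A (h z) v = ∑ a, v a * pd A a (h z) := by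
    conv_lhs => rw [← Finset.univ_sum_single v]
    rw [map_sum]
    refine Finset.sum_congr rfl fun a _ => ?_
    have hs : (Pi.single a (v a) : Fin N → ℝ) = (v a) • (Pi.single a (1:ℝ) : Fin N → ℝ) := by
      rw [← Pi.single_smul, smul_eq_mul, mul_one]
    rw [hs, map_smul, smul_eq_mul, pd]
  calc pd (fun y => A (h y)) i z = fderiv ℝ A (h z) v := by rw [pd, hcomp]; rfl
    _ = ∑ a, v a * pd A a (h z) := hexp
    _ = ∑ a, pd A a (h z) * pd (fun y => h y a) i z := by
        refine Finset.sum_congr rfl fun a _ => ?_; rw [hcoord a, mul_comm]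

lemma nambu_contDiff {N : ℕ} {lam : Fin N → Fin N → Fin N → (Fin N → ℝ) → ℝ}
    (hlam : ∀ i j k, ContDiff ℝ (⊤ : ℕ∞) (lam i j k)) {A B C : (Fin N → ℝ) → ℝ}
    (hA : ContDiff ℝ (⊤ : ℕ∞) A) (hB : ContDiff ℝ (⊤ : ℕ∞) B) (hC : ContDiff ℝ (⊤ : ℕ∞) C) :
    ContDiff ℝ (⊤ : ℕ∞) (nambu lam A B C) := by
  unfold nambu
  refine ContDiff.sum fun i _ => ContDiff.sum fun j _ => ContDiff.sum fun k _ => ?_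
  exact (((hlam i j k).mul (pd_contDiff hA i)).mul (pd_contDiff hB j)).mul (pd_contDiff hC k)

section Sums
variable {ι : Type*} [Fintype ι] {M : Type*} [AddCommMonoid M]

lemma pull4 (F : ι → ι → ι → ι → M) :
    (∑ i, ∑ j, ∑ k, ∑ a, F i j k a) = ∑ a, ∑ i, ∑ j, ∑ k, F i j k a :=
  calc (∑ i, ∑ j, ∑ k, ∑ a, F i j k a)
      = ∑ i, ∑ j, ∑ a, ∑ k, F i j k a :=
        Finset.sum_congr rfl fun _ _ => Finset.sum_congr rfl fun _ _ => Finset.sum_comm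
    _ = ∑ i, ∑ a, ∑ j, ∑ k, F i j k a :=
        Finset.sum_congr rfl fun _ _ => Finset.sum_comm
    _ = ∑ a, ∑ i, ∑ j, ∑ k, F i j k a := Finset.sum_comm

lemma comm6 (F : ι → ι → ι → ι → ι → ι → M) :
    (∑ a, ∑ b, ∑ c, ∑ i, ∑ j, ∑ k, F a b c i j k)
    = ∑ i, ∑ j, ∑ k, ∑ a, ∑ b, ∑ c, F a b c i j k :=
  calc (∑ a, ∑ b, ∑ c, ∑ i, ∑ j, ∑ k, F a b c i j k)
      = ∑ a, ∑ b, ∑ i, ∑ j, ∑ k, ∑ c, F a b c i j k :=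
        Finset.sum_congr rfl fun a _ => Finset.sum_congr rfl fun b _ =>
          (pull4 (fun i j k c => F a b c i j k)).symm
    _ = ∑ a, ∑ i, ∑ j, ∑ k, ∑ b, ∑ c, F a b c i j k :=
        Finset.sum_congr rfl fun a _ =>
          (pull4 (fun i j k b => ∑ c, F a b c i j k)).symm
    _ = ∑ i, ∑ j, ∑ k, ∑ a, ∑ b, ∑ c, F a b c i j k :=
        (pull4 (fun i j k a => ∑ b, ∑ c, F a b c i j k)).symm

lemma comm3 (F : ι → ι → ι → M) :
    (∑ c, ∑ b, ∑ a, F a b c) = ∑ a, ∑ b, ∑ c, F a b c :=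
  calc (∑ c, ∑ b, ∑ a, F a b c)
      = ∑ c, ∑ a, ∑ b, F a b c := Finset.sum_congr rfl fun _ _ => Finset.sum_comm
    _ = ∑ a, ∑ c, ∑ b, F a b c := Finset.sum_comm
    _ = ∑ a, ∑ b, ∑ c, F a b c := Finset.sum_congr rfl fun _ _ => Finset.sum_comm

end Sums

lemma expand_key {ι : Type*} [Fintype ι] (L : ι → ι → ι → ℝ) (H : ι → ι → ℝ) (P Q R : ι → ℝ) :
    ∑ a, ∑ b, ∑ c, (∑ i, ∑ j, ∑ k, L i j k * H a i * H b j * H c k) * P a * Q b * R c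
    = ∑ i, ∑ j, ∑ k, L i j k * (∑ a, P a * H a i) * (∑ b, Q b * H b j) * (∑ c, R c * H c k) := by
  have step : ∀ a b c : ι,
      (∑ i, ∑ j, ∑ k, L i j k * H a i * H b j * H c k) * P a * Q b * R c
      = ∑ i, ∑ j, ∑ k, L i j k * H a i * H b j * H c k * P a * Q b * R c := by
    intro a b c; simp [Finset.sum_mul]
  simp only [step]
  rw [comm6 (fun a b c i j k => L i j k * H a i * H b j * H c k * P a * Q b * R c)]
  refine Finset.sum_congr rfl fun i _ => Finset.sum_congr rfl fun j _ =>
    Finset.sum_congr rfl fun k _ => ?_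
  calc (∑ a, ∑ b, ∑ c, L i j k * H a i * H b j * H c k * P a * Q b * R c)
      = ∑ c, ∑ b, ∑ a, L i j k * (P a * H a i) * (Q b * H b j) * (R c * H c k) := by
        rw [comm3 (fun a b c => L i j k * (P a * H a i) * (Q b * H b j) * (R c * H c k))]
        refine Finset.sum_congr rfl fun a _ => Finset.sum_congr rfl fun b _ =>
          Finset.sum_congr rfl fun c _ => by ring
    _ = L i j k * (∑ a, P a * H a i) * (∑ b, Q b * H b j) * (∑ c, R c * H c k) := by
        rw [Finset.mul_sum]
        refine Finset.sum_congr rfl fun c _ => ?_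
        rw [show L i j k * (∑ a, P a * H a i) * (∑ b, Q b * H b j) * (R c * H c k)
            = (L i j k * (∑ a, P a * H a i) * (R c * H c k)) * (∑ b, Q b * H b j) from by ring,
          Finset.mul_sum]
        refine Finset.sum_congr rfl fun b _ => ?_
        rw [show L i j k * (∑ a, P a * H a i) * (R c * H c k) * (Q b * H b j)
            = (L i j k * (Q b * H b j) * (R c * H c k)) * (∑ a, P a * H a i) from by ring,
          Finset.mul_sum]
        refine Finset.sum_congr rfl fun a _ => by ring

lemma nambu_transform {N : ℕ}
    (lam lamT : Fin N → Fin N → Fin N → (Fin N → ℝ) → ℝ)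
    (h hinv : (Fin N → ℝ) → (Fin N → ℝ))
    (hh : Differentiable ℝ h)
    (hright : ∀ x, h (hinv x) = x)
    (hlamT : ∀ i j k x, lamT i j k x
      = nambu lam (fun z => h z i) (fun z => h z j) (fun z => h z k) (hinv x))
    {A B C : (Fin N → ℝ) → ℝ}
    (hA : Differentiable ℝ A) (hB : Differentiable ℝ B) (hC : Differentiable ℝ C)
    (x : Fin N → ℝ) :
    nambu lamT A B C x
      = nambu lam (fun z => A (h z)) (fun z => B (h z)) (fun z => C (h z)) (hinv x) := by
  simp only [nambu, hlamT]
  simp only [pd_comp hA hh, pd_comp hB hh, pd_comp hC hh, hright]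
  exact expand_key (fun i j k => lam i j k (hinv x))
    (fun a i => pd (fun y => h y a) i (hinv x))
    (fun a => pd A a x) (fun b => pd B b x) (fun c => pd C c x)

end Aux

/-- if the tri-linear bracket of a smooth totally antisymmetric tensor field
satisfies the fundamental identity, then for any smooth diffeomorphism `h` (with smooth
inverse `hinv`) the transformed tensor `λ̃_{ijk}(x) = {h_i,h_j,h_k}(hinv x)` also defines
a bracket satisfying the fundamental identity. -/
theorem statement7 (N : ℕ)
    (lam : Fin N → Fin N → Fin N → (Fin N → ℝ) → ℝ)
    (hsmooth : ∀ i j k, ContDiff ℝ (⊤ : ℕ∞) (lam i j k))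
    (hanti : TotallyAntisym lam)
    (hFI : FundId lam)
    (h hinv : (Fin N → ℝ) → (Fin N → ℝ))
    (hh : ContDiff ℝ (⊤ : ℕ∞) h) (hhinv : ContDiff ℝ (⊤ : ℕ∞) hinv)
    (hleft : ∀ z, hinv (h z) = z) (hright : ∀ x, h (hinv x) = x)
    (lamT : Fin N → Fin N → Fin N → (Fin N → ℝ) → ℝ)
    (hlamT : ∀ i j k x, lamT i j k x
      = nambu lam (fun z => h z i) (fun z => h z j) (fun z => h z k) (hinv x)) :
    FundId lamT := by
  have hhd : Differentiable ℝ h := hh.differentiable (by simp)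
  have hcoord : ∀ a, ContDiff ℝ (⊤ : ℕ∞) (fun z => h z a) := fun a => (contDiff_pi.mp hh a)
  have hlamTsm : ∀ i j k, ContDiff ℝ (⊤ : ℕ∞) (lamT i j k) := by
    intro i j k
    have he : lamT i j k = fun x =>
        nambu lam (fun z => h z i) (fun z => h z j) (fun z => h z k) (hinv x) :=
      funext (hlamT i j k)
    rw [he]
    exact (nambu_contDiff hsmooth (hcoord i) (hcoord j) (hcoord k)).comp hhinv
  intro tA tB tC tD tE hA hB hC hD hE x
  set A := fun z => tA (h z) with hAdef
  set B := fun z => tB (h z) with hBdef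
  set C := fun z => tC (h z) with hCdef
  set D := fun z => tD (h z) with hDdef
  set E := fun z => tE (h z) with hEdef
  have hA' : ContDiff ℝ (⊤ : ℕ∞) A := hA.comp hh
  have hB' : ContDiff ℝ (⊤ : ℕ∞) B := hB.comp hh
  have hC' : ContDiff ℝ (⊤ : ℕ∞) C := hC.comp hh
  have hD' : ContDiff ℝ (⊤ : ℕ∞) D := hD.comp hh
  have hE' : ContDiff ℝ (⊤ : ℕ∞) E := hE.comp hh
  have key : ∀ (X Y Z : (Fin N → ℝ) → ℝ), Differentiable ℝ X → Differentiable ℝ Y →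
      Differentiable ℝ Z → ∀ y, nambu lamT X Y Z y
        = nambu lam (fun z => X (h z)) (fun z => Y (h z)) (fun z => Z (h z)) (hinv y) :=
    fun X Y Z hX hY hZ y => nambu_transform lam lamT h hinv hhd hright hlamT hX hY hZ y
  have hGsmABC : ContDiff ℝ (⊤ : ℕ∞) (nambu lamT tA tB tC) := nambu_contDiff hlamTsm hA hB hC
  have hGsmADE : ContDiff ℝ (⊤ : ℕ∞) (nambu lamT tA tD tE) := nambu_contDiff hlamTsm hA hD hE
  have hGsmBDE : ContDiff ℝ (⊤ : ℕ∞) (nambu lamT tB tD tE) := nambu_contDiff hlamTsm hB hD hE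
  have hGsmCDE : ContDiff ℝ (⊤ : ℕ∞) (nambu lamT tC tD tE) := nambu_contDiff hlamTsm hC hD hE
  have comp3 : ∀ (X Y Z : (Fin N → ℝ) → ℝ), ContDiff ℝ (⊤ : ℕ∞) X → ContDiff ℝ (⊤ : ℕ∞) Y →
      ContDiff ℝ (⊤ : ℕ∞) Z → (fun z => nambu lamT X Y Z (h z))
        = nambu lam (fun z => X (h z)) (fun z => Y (h z)) (fun z => Z (h z)) := by
    intro X Y Z hX hY hZ
    funext z
    rw [key X Y Z (hX.differentiable (by simp)) (hY.differentiable (by simp))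
      (hZ.differentiable (by simp)) (h z), hleft z]
  rw [key (nambu lamT tA tB tC) tD tE (hGsmABC.differentiable (by simp))
      (hD.differentiable (by simp)) (hE.differentiable (by simp)) x,
    key (nambu lamT tA tD tE) tB tC (hGsmADE.differentiable (by simp))
      (hB.differentiable (by simp)) (hC.differentiable (by simp)) x,
    key tA (nambu lamT tB tD tE) tC (hA.differentiable (by simp))
      (hGsmBDE.differentiable (by simp)) (hC.differentiable (by simp)) x,
    key tA tB (nambu lamT tC tD tE) (hA.differentiable (by simp))
      (hB.differentiable (by simp)) (hGsmCDE.differentiable (by simp)) x,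
    comp3 tA tB tC hA hB hC, comp3 tA tD tE hA hD hE, comp3 tB tD tE hB hD hE,
    comp3 tC tD tE hC hD hE]
  exact hFI A B C D E hA' hB' hC' hD' hE' (hinv x)
end
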